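/- Let Ω ⊆ ℝⁿ be open and let p : closure(Ω) → [1,∞) be bounded and log-Hölder continuous with constant C_log, i.e. |p(x) − p(y)| ≤ C_log / log(e + 1/|x−y|) for all distinct x, y ∈ closure(Ω). For x ∈ closure(Ω) and R > 0 set A_R := B_R(x) ∩ Ω. Then: (i) for every x ∈ closure(Ω) and every R ∈ (0, 1/4], R^{p⁺_{A_R} − p⁻_{A_R}} ≥ e^{−C_log} 2^{−(p⁺ − p⁻)}; (ii) setting r₀ := (1/2) min{ 1/4, (1/2) e^{−n C_log} }, for every x ∈ closure(Ω) and every R ∈ (0, r₀] one has 1/n + 1/p⁺_{A_R} − 1/p⁻_{A_R} ≥ 1/n − C_log / log(1/(2 r₀)) > 0. -/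

import Mathlib

/-!
The oscillation `p⁺_A − p⁻_A` is the diameter of `p '' A ⊆ ℝ`. On `A_R = B_R(x) ∩ Ω` any two
points are at distance at most `2R`, so log-Hölder continuity bounds this diameter by
`C_log / log(e + 1/(2R)) ≤ C_log / log(1/(2R))`. Part (i) is this bound exponentiated, the factor
`2^{−(p⁺ − p⁻)}` absorbing the `2` in `2R`; part (ii) follows from `1/p⁻_A − 1/p⁺_A ≤ p⁺_A − p⁻_A`
(as `p ≥ 1`) and `log(1/(2r₀)) ≥ log 2 + n C_log`.
-/

open MeasureTheory Set
open scoped ENNReal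

noncomputable def rZero (n : ℕ) (Clog : ℝ) : ℝ :=
  (1/2) * min (1/4) ((1/2) * Real.exp (-((n : ℝ) * Clog)))

open Real Metric Bornology

noncomputable def logHolderModulus (C t : ℝ) : ℝ := C / log (exp 1 + 1 / t)

lemma one_le_log_exp_one_add {t : ℝ} (ht : 0 ≤ t) : 1 ≤ log (exp 1 + t) := by
  simpa using log_le_log (exp_pos 1) (le_add_of_nonneg_right ht)

lemma logHolderModulus_nonneg {C : ℝ} (hC : 0 ≤ C) {t : ℝ} (ht : 0 ≤ t) :
    0 ≤ logHolderModulus C t :=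
  div_nonneg hC (zero_le_one.trans (one_le_log_exp_one_add (by positivity)))

lemma logHolderModulus_mono {C s t : ℝ} (hC : 0 ≤ C) (hs : 0 < s) (hst : s ≤ t) :
    logHolderModulus C s ≤ logHolderModulus C t := by
  unfold logHolderModulus
  have ht : 0 < t := hs.trans_le hst
  gcongr
  exact zero_lt_one.trans_le (one_le_log_exp_one_add (by positivity))

lemma logHolderModulus_le_div_log_one_div {C s t : ℝ} (hC : 0 ≤ C) (hs : 0 < s) (hst : s ≤ t)
    (ht : 0 < log (1 / t)) : logHolderModulus C s ≤ C / log (1 / t) := by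
  have ht₀ : 0 < t := hs.trans_le hst
  refine div_le_div_of_nonneg_left hC ht (log_le_log (by positivity) ?_)
  linarith [exp_pos 1, one_div_le_one_div_of_le hs hst]

lemma sSup_sub_sInf_le_of_subset {s t : Set ℝ} (hst : s ⊆ t) (ht : IsBounded t) :
    sSup s - sInf s ≤ sSup t - sInf t := by
  rw [← Real.diam_eq ht, ← Real.diam_eq (ht.subset hst)]
  exact diam_mono hst ht

lemma sSup_sub_sInf_image_le_logHolderModulus {E : Type*} [MetricSpace E] {p : E → ℝ}
    {A : Set E} {C d : ℝ} (hC : 0 ≤ C) (hd : 0 < d) (hpA : IsBounded (p '' A))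
    (hpLH : ∀ a ∈ A, ∀ b ∈ A, a ≠ b → |p a - p b| ≤ logHolderModulus C (dist a b))
    (hA : ∀ a ∈ A, ∀ b ∈ A, dist a b ≤ d) :
    sSup (p '' A) - sInf (p '' A) ≤ logHolderModulus C d := by
  rw [← Real.diam_eq hpA]
  refine diam_le_of_forall_dist_le (logHolderModulus_nonneg hC hd.le) ?_
  rintro _ ⟨a, ha, rfl⟩ _ ⟨b, hb, rfl⟩
  rcases eq_or_ne a b with rfl | hab
  · simpa using logHolderModulus_nonneg hC hd.le
  calc dist (p a) (p b) = |p a - p b| := Real.dist_eq _ _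
    _ ≤ logHolderModulus C (dist a b) := hpLH a ha b hb hab
    _ ≤ logHolderModulus C d := logHolderModulus_mono hC (dist_pos.2 hab) (hA a ha b hb)

lemma exp_neg_mul_two_rpow_neg_le_rpow {C R δ Δ : ℝ} (hR : 0 < R) (hδ : 0 ≤ δ) (hδΔ : δ ≤ Δ)
    (hδC : δ ≤ logHolderModulus C (2 * R)) : exp (-C) * 2 ^ (-Δ) ≤ R ^ δ := by
  set L := log (exp 1 + 1 / (2 * R))
  have hL : 1 ≤ L := one_le_log_exp_one_add (by positivity)
  have hδL : δ * L ≤ C := (le_div_iff₀ (by linarith)).1 hδC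
  have hlog : log (1 / (2 * R)) ≤ L :=
    log_le_log (by positivity) (by linarith [exp_pos 1])
  have hlogR : log R = -log (1 / (2 * R)) - log 2 := by
    rw [one_div, log_inv, log_mul two_ne_zero hR.ne']
    ring
  rw [rpow_def_of_pos hR, rpow_def_of_pos two_pos, ← exp_add, exp_le_exp, hlogR]
  nlinarith [mul_le_mul_of_nonneg_left hlog hδ, mul_le_mul_of_nonneg_left hδΔ (log_pos one_lt_two).le]

lemma log_two_add_mul_le_log_one_div_two_mul_rZero (n : ℕ) (C : ℝ) :
    log 2 + n * C ≤ log (1 / (2 * rZero n C)) := by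
  have h2r : 2 * rZero n C ≤ (1/2) * exp (-(n * C)) := by
    unfold rZero
    linarith [min_le_right (1/4 : ℝ) ((1/2) * exp (-(n * C)))]
  have h2r_pos : 0 < 2 * rZero n C := by
    unfold rZero
    positivity
  calc log 2 + n * C = -log ((1/2) * exp (-(n * C))) := by
        rw [log_mul (by norm_num) (exp_ne_zero _), log_exp, one_div, log_inv]
        ring
    _ ≤ -log (2 * rZero n C) := neg_le_neg (log_le_log h2r_pos h2r)
    _ = log (1 / (2 * rZero n C)) := by rw [one_div, log_inv]

lemma div_log_one_div_two_mul_rZero_lt {n : ℕ} (hn : 0 < n) {C : ℝ} (hC : 0 ≤ C) :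
    C / log (1 / (2 * rZero n C)) < 1 / n := by
  have hL := log_two_add_mul_le_log_one_div_two_mul_rZero n C
  have hn' : (0 : ℝ) < n := Nat.cast_pos.2 hn
  have hlog2 := log_pos one_lt_two
  rw [div_lt_div_iff₀ (by nlinarith) hn']
  nlinarith

lemma one_div_sub_one_div_le_sub {a b : ℝ} (ha : 1 ≤ a) (hab : a ≤ b) : 1 / a - 1 / b ≤ b - a := by
  have hb : 1 ≤ b := ha.trans hab
  rw [div_sub_div _ _ (by positivity) (by positivity), div_le_iff₀ (by positivity)]
  nlinarith [mul_le_mul_of_nonneg_left (one_le_mul_of_one_le_of_one_le ha hb) (sub_nonneg.2 hab)]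

theorem stmt_17_general {n : ℕ} (hn : 0 < n)
    (Ω : Set (EuclideanSpace ℝ (Fin n)))
    (p : EuclideanSpace ℝ (Fin n) → ℝ)
    (hp1 : ∀ x ∈ closure Ω, 1 ≤ p x) (hpB : BddAbove (p '' closure Ω))
    (Clog : ℝ) (hClog : 0 < Clog)
    (hpLH : ∀ x ∈ closure Ω, ∀ y ∈ closure Ω, x ≠ y →
      |p x - p y| ≤ Clog / Real.log (Real.exp 1 + 1 / dist x y)) :
    (∀ x ∈ closure Ω, ∀ R : ℝ, R ∈ Set.Ioc (0:ℝ) (1/4) →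
      Real.exp (-Clog) *
          (2:ℝ) ^ (-(sSup (p '' closure Ω) - sInf (p '' closure Ω))) ≤
        R ^ (sSup (p '' (Metric.ball x R ∩ Ω)) -
              sInf (p '' (Metric.ball x R ∩ Ω)))) ∧
    (0 < 1 / (n : ℝ) - Clog / Real.log (1 / (2 * rZero n Clog)) ∧
      ∀ x ∈ closure Ω, ∀ R : ℝ, R ∈ Set.Ioc (0:ℝ) (rZero n Clog) →
        1 / (n : ℝ) - Clog / Real.log (1 / (2 * rZero n Clog)) ≤
          1 / (n : ℝ) + 1 / sSup (p '' (Metric.ball x R ∩ Ω)) -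
            1 / sInf (p '' (Metric.ball x R ∩ Ω))) := by
  have hsub (x : EuclideanSpace ℝ (Fin n)) (R : ℝ) : p '' (ball x R ∩ Ω) ⊆ p '' closure Ω :=
    image_mono fun a ha ↦ subset_closure ha.2
  have hbdd : IsBounded (p '' closure Ω) :=
    isBounded_iff_bddBelow_bddAbove.2 ⟨⟨1, by rintro _ ⟨a, ha, rfl⟩; exact hp1 a ha⟩, hpB⟩
  have hosc (x : EuclideanSpace ℝ (Fin n)) (R : ℝ) (hR : 0 < R) :
      sSup (p '' (ball x R ∩ Ω)) - sInf (p '' (ball x R ∩ Ω)) ≤ logHolderModulus Clog (2 * R) :=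
    sSup_sub_sInf_image_le_logHolderModulus hClog.le (by positivity) (hbdd.subset (hsub x R))
      (fun a ha b hb ↦ hpLH a (subset_closure ha.2) b (subset_closure hb.2))
      (fun a ha b hb ↦ (dist_le_diam_of_mem isBounded_ball ha.1 hb.1).trans (diam_ball hR.le))
  have hinf_le_sup (x : EuclideanSpace ℝ (Fin n)) (R : ℝ) :
      sInf (p '' (ball x R ∩ Ω)) ≤ sSup (p '' (ball x R ∩ Ω)) :=
    have hbddA := isBounded_iff_bddBelow_bddAbove.1 (hbdd.subset (hsub x R))
    Real.sInf_le_sSup _ hbddA.1 hbddA.2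
  have hlog_pos : 0 < log (1 / (2 * rZero n Clog)) :=
    lt_of_lt_of_le (add_pos_of_pos_of_nonneg (log_pos one_lt_two) (by positivity))
      (log_two_add_mul_le_log_one_div_two_mul_rZero n Clog)
  refine ⟨fun x _ R hR ↦ ?_, sub_pos.2 (div_log_one_div_two_mul_rZero_lt hn hClog.le),
    fun x hx R hR ↦ ?_⟩
  · exact exp_neg_mul_two_rpow_neg_le_rpow hR.1 (sub_nonneg.2 (hinf_le_sup x R))
      (sSup_sub_sInf_le_of_subset (hsub x R) hbdd) (hosc x R hR.1)
  · have hA : (p '' (ball x R ∩ Ω)).Nonempty :=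
      (mem_closure_iff.1 hx _ isOpen_ball (mem_ball_self hR.1)).image p
    have hinf_ge_one : 1 ≤ sInf (p '' (ball x R ∩ Ω)) :=
      le_csInf hA (by rintro _ ⟨a, ha, rfl⟩; exact hp1 a (subset_closure ha.2))
    have hmod := logHolderModulus_le_div_log_one_div (s := 2 * R) hClog.le (by linarith [hR.1])
      (by linarith [hR.2]) hlog_pos
    linarith [one_div_sub_one_div_le_sub hinf_ge_one (hinf_le_sup x R), hosc x R hR.1]

/-- consequences of log-Hölder continuity of `p`: with
`A_R = B_R(x) ∩ Ω`, (i) for `R ∈ (0,1/4]`,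
`R^{p⁺_{A_R} − p⁻_{A_R}} ≥ e^{−C_log} 2^{−(p⁺−p⁻)}`; (ii) with
`r₀ = (1/2)min{1/4, (1/2)e^{−nC_log}}`, for `R ∈ (0,r₀]`,
`1/n + 1/p⁺_{A_R} − 1/p⁻_{A_R} ≥ 1/n − C_log/log(1/(2r₀)) > 0`. -/
theorem stmt_17 {n : ℕ} (hn : 0 < n)
    (Ω : Set (EuclideanSpace ℝ (Fin n))) (hΩo : IsOpen Ω)
    (p : EuclideanSpace ℝ (Fin n) → ℝ)
    (hp1 : ∀ x ∈ closure Ω, 1 ≤ p x) (hpB : BddAbove (p '' closure Ω))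
    (Clog : ℝ) (hClog : 0 < Clog)
    (hpLH : ∀ x ∈ closure Ω, ∀ y ∈ closure Ω, x ≠ y →
      |p x - p y| ≤ Clog / Real.log (Real.exp 1 + 1 / dist x y)) :
    (∀ x ∈ closure Ω, ∀ R : ℝ, R ∈ Set.Ioc (0:ℝ) (1/4) →
      Real.exp (-Clog) *
          (2:ℝ) ^ (-(sSup (p '' closure Ω) - sInf (p '' closure Ω))) ≤
        R ^ (sSup (p '' (Metric.ball x R ∩ Ω)) -
              sInf (p '' (Metric.ball x R ∩ Ω)))) ∧
    (0 < 1 / (n : ℝ) - Clog / Real.log (1 / (2 * rZero n Clog)) ∧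
      ∀ x ∈ closure Ω, ∀ R : ℝ, R ∈ Set.Ioc (0:ℝ) (rZero n Clog) →
        1 / (n : ℝ) - Clog / Real.log (1 / (2 * rZero n Clog)) ≤
          1 / (n : ℝ) + 1 / sSup (p '' (Metric.ball x R ∩ Ω)) -
            1 / sInf (p '' (Metric.ball x R ∩ Ω))) :=
  stmt_17_general hn Ω p hp1 hpB Clog hClog hpLH
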